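/- arXiv:2601.20756 — 4 statements merged into one kernel-verified Lean document; each statement's English description precedes it below -/
import Mathlib

section
/- (Marginal posterior as conditional expectation) Let π be a probability measure on a separable Hilbert space H supported in the Cameron–Martin space of a trace-class covariance C, let π^y be the posterior measure with dπ^y/dπ (x_0) proportional to exp(-Φ(x_0)), and let π_t and π^y_t denote the laws of X_t when the OU process dX_t = -(1/2)X_t dt + sqrt(C)dW_t is started from π and π^y respectively. Then π^y_t is absolutely continuous with respect to π_t, and dπ^y_t/dπ_t (x) is proportional (with constant E_π[exp(-Φ(X_0))]^{-1}) to E_π[exp(-Φ(X_0)) | X_t = x]. -/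
/-!
Under the joint law `ρ = prior ⊗ₘ κ` of `(X₀, X_t)`, the posterior marginal `π^y_t` is the
`X_t`-marginal of `ρ` reweighted by `ξ⁻¹ exp (-Φ X₀)`. On events `{X_t ∈ s}` this weight has the
same integral as its conditional expectation given `X_t`, which is `ξ⁻¹ m X_t`; hence the
marginal has density `ξ⁻¹ m` with respect to `π_t`.
-/

open MeasureTheory ProbabilityTheory Real
open scoped ENNReal RealInnerProductSpace

noncomputable section

variable {H : Type*} [NormedAddCommGroup H] [InnerProductSpace ℝ H] [CompleteSpace H]
  [SecondCountableTopology H] [MeasurableSpace H] [BorelSpace H]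

/-- A measure on a Hilbert space is Gaussian with mean `m` and covariance `C` if all of its
one-dimensional projections are Gaussian with the corresponding mean and variance. -/
def IsGaussianMeasure (μ : Measure H) (m : H) (C : H →L[ℝ] H) : Prop :=
  IsProbabilityMeasure μ ∧
    ∀ l : H →L[ℝ] ℝ,
      μ.map l = gaussianReal (l m)
        (Real.toNNReal ⟪C ((InnerProductSpace.toDual ℝ H).symm l),
          (InnerProductSpace.toDual ℝ H).symm l⟫)

/-- A bounded operator is positive if `⟪C x, x⟫ ≥ 0` for all `x`. -/
def IsPositiveOp (C : H →L[ℝ] H) : Prop := ∀ x, 0 ≤ ⟪C x, x⟫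

/-- A positive operator is trace class if the trace along some Hilbert basis is finite. -/
def IsTraceClassOp (C : H →L[ℝ] H) : Prop :=
  ∃ b : HilbertBasis ℕ ℝ H, Summable fun i => ⟪C (b i), b i⟫

namespace MeasureTheory

variable {α β : Type*} {mα : MeasurableSpace α} {mβ : MeasurableSpace β}

lemma Measure.map_withDensity_comp (μ : Measure α) {φ : α → β} (hφ : Measurable φ)
    {g : β → ℝ≥0∞} (hg : Measurable g) :
    (μ.withDensity fun x ↦ g (φ x)).map φ = (μ.map φ).withDensity g := by
  ext s hs
  rw [map_apply hφ hs, withDensity_apply _ (hφ hs), withDensity_apply _ hs,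
    setLIntegral_map hs hg hφ]

lemma Measure.withDensity_compProd_left (μ : Measure α) [SFinite μ] (κ : Kernel α β)
    [IsSFiniteKernel κ] {g : α → ℝ≥0∞} (hg : Measurable g) :
    μ.withDensity g ⊗ₘ κ = (μ ⊗ₘ κ).withDensity (fun p ↦ g p.1) := by
  ext s hs
  have hs_slice (a : α) : MeasurableSet (Prod.mk a ⁻¹' s) := measurable_prodMk_left hs
  rw [compProd_apply hs, withDensity_apply _ hs,
    lintegral_withDensity_eq_lintegral_mul _ hg (Kernel.measurable_kernel_prodMk_left hs),
    ← lintegral_indicator hs,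
    lintegral_compProd ((hg.comp measurable_fst).indicator hs (f := fun p ↦ g p.1))]
  congr with a
  rw [Pi.mul_apply, ← lintegral_indicator_const (hs_slice a)]
  rfl

lemma Measure.withDensity_ofReal_condExp_apply {m m₀ : MeasurableSpace α} {ρ : Measure[m₀] α}
    (hm : m ≤ m₀) [SigmaFinite (ρ.trim hm)] {f : α → ℝ} (hf : Integrable f ρ)
    (hf_nonneg : 0 ≤ᵐ[ρ] f) {s : Set α} (hs : MeasurableSet[m] s) :
    ρ.withDensity (fun x ↦ ENNReal.ofReal (ρ[f | m] x)) s =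
      ρ.withDensity (fun x ↦ ENNReal.ofReal (f x)) s := by
  rw [withDensity_apply _ (hm s hs), withDensity_apply _ (hm s hs),
    ← ofReal_integral_eq_lintegral_ofReal integrable_condExp.restrict
      (ae_restrict_of_ae (condExp_nonneg hf_nonneg)),
    ← ofReal_integral_eq_lintegral_ofReal hf.restrict (ae_restrict_of_ae hf_nonneg),
    setIntegral_condExp hm hf hs]

theorem Measure.bind_withDensity_eq_withDensity_condExp_comap_snd {μ : Measure α}
    [IsFiniteMeasure μ] {κ : Kernel α β} [IsMarkovKernel κ] {f : α → ℝ} (hf : Measurable f)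
    (hf_nonneg : 0 ≤ f) (hf_int : Integrable f μ) {g : β → ℝ} (hg : Measurable g)
    (hg_condExp : (fun p : α × β ↦ g p.2) =ᵐ[μ ⊗ₘ κ]
      (μ ⊗ₘ κ)[fun p ↦ f p.1 | MeasurableSpace.comap Prod.snd mβ]) :
    (μ.withDensity fun x ↦ ENNReal.ofReal (f x)).bind κ =
      (μ.bind κ).withDensity fun y ↦ ENNReal.ofReal (g y) := by
  have hf_int' : Integrable (fun p : α × β ↦ f p.1) (μ ⊗ₘ κ) := by
    rw [← fst_compProd μ κ] at hf_int
    exact hf_int.comp_measurable measurable_fst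
  have hdensity : (fun p : α × β ↦ ENNReal.ofReal (g p.2)) =ᵐ[μ ⊗ₘ κ]
      fun p ↦ ENNReal.ofReal ((μ ⊗ₘ κ)[fun p ↦ f p.1 | MeasurableSpace.comap Prod.snd mβ] p) :=
    hg_condExp.mono fun _ hp ↦ congrArg ENNReal.ofReal hp
  calc (μ.withDensity fun x ↦ ENNReal.ofReal (f x)).bind κ
      = ((μ ⊗ₘ κ).withDensity fun p ↦ ENNReal.ofReal (f p.1)).map Prod.snd := by
        rw [← snd_compProd, withDensity_compProd_left _ _ hf.ennreal_ofReal, Measure.snd]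
    _ = ((μ ⊗ₘ κ).withDensity fun p ↦ ENNReal.ofReal (g p.2)).map Prod.snd := by
        ext s hs
        rw [map_apply measurable_snd hs, map_apply measurable_snd hs,
          withDensity_congr_ae hdensity,
          withDensity_ofReal_condExp_apply measurable_snd.comap_le hf_int'
            (.of_forall fun p ↦ hf_nonneg p.1) ⟨s, hs, rfl⟩]
    _ = (μ.bind κ).withDensity fun y ↦ ENNReal.ofReal (g y) := by
        rw [← snd_compProd, Measure.snd]
        exact map_withDensity_comp (μ ⊗ₘ κ) measurable_snd
          (g := fun y ↦ ENNReal.ofReal (g y)) hg.ennreal_ofReal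

end MeasureTheory

theorem marginal_posterior_density_general
    (prior : Measure H) [IsProbabilityMeasure prior]
    (Φ : H → ℝ) (hΦ : Measurable Φ)
    (ξ : ℝ) (hξpos : 0 < ξ)
    (hint : Integrable (fun x₀ => Real.exp (-Φ x₀)) prior)
    (κ : Kernel H H) [IsMarkovKernel κ]
    -- `m` is a version of `E_prior[exp (-Φ(X₀)) | X_t = ·]`
    (m : H → ℝ) (hm : Measurable m)
    (hmcond : (fun p : H × H => m p.2) =ᵐ[prior.compProd κ]
      (prior.compProd κ)[fun p : H × H => Real.exp (-Φ p.1) |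
        MeasurableSpace.comap Prod.snd inferInstance]) :
    (prior.withDensity fun x₀ => ENNReal.ofReal (ξ⁻¹ * Real.exp (-Φ x₀))).bind κ ≪
        prior.bind κ ∧
      (prior.withDensity fun x₀ => ENNReal.ofReal (ξ⁻¹ * Real.exp (-Φ x₀))).bind κ =
        (prior.bind κ).withDensity fun x => ENNReal.ofReal (ξ⁻¹ * m x) := by
  have hposterior_condExp : (fun p : H × H => ξ⁻¹ * m p.2) =ᵐ[prior.compProd κ]
      (prior.compProd κ)[fun p : H × H => ξ⁻¹ * Real.exp (-Φ p.1) |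
        MeasurableSpace.comap Prod.snd inferInstance] := by
    filter_upwards [hmcond, condExp_smul ξ⁻¹ (fun p : H × H => Real.exp (-Φ p.1))
      (MeasurableSpace.comap Prod.snd inferInstance)] with p hp hsmul
    rw [hp]
    exact hsmul.symm
  have hbayes := Measure.bind_withDensity_eq_withDensity_condExp_comap_snd
    (measurable_const.mul hΦ.neg.exp)
    (fun x₀ => mul_nonneg (inv_nonneg.2 hξpos.le) (Real.exp_pos _).le)
    (hint.const_mul ξ⁻¹) (measurable_const.mul hm) hposterior_condExp
  exact ⟨hbayes ▸ withDensity_absolutelyContinuous _ _, hbayes⟩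

/-- **Marginal posterior as conditional expectation.**
Let `prior` be supported in (a ball of) the Cameron–Martin space `√C(H)` of the trace-class
covariance `C`, let `π^y = prior · ξ⁻¹exp(-Φ)` be the posterior, and let `π_t`, `π^y_t` be the
laws of the OU process `dX = -(1/2)X dt + √C dW` at time `t` started from `prior` and `π^y`,
i.e. the images of `prior` and `π^y` under the Gaussian transition kernel
`κ x₀ = N(e^{-t/2}x₀, (1-e^{-t})C)`. If `m` is a version of the conditional expectation
`E_prior[exp (-Φ(X₀)) | X_t = ·]` (w.r.t. the joint law `prior ⊗ₘ κ`), then `π^y_t ≪ π_t` with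
`dπ^y_t/dπ_t (x) = ξ⁻¹ m x`, where `ξ = E_prior[exp (-Φ(X₀))]`. -/
theorem marginal_posterior_density
    (C sqrtC : H →L[ℝ] H)
    (hCsa : IsSelfAdjoint C) (hCpos : IsPositiveOp C) (hCtr : IsTraceClassOp C)
    (hsqrt : sqrtC.comp sqrtC = C)
    (t : ℝ) (ht : 0 < t)
    (prior : Measure H) [IsProbabilityMeasure prior]
    -- the support of the prior is contained in a ball of the Cameron–Martin space of `C`
    (R : ℝ) (hsupp : ∀ᵐ x₀ ∂prior, ∃ w : H, sqrtC w = x₀ ∧ ‖w‖ ≤ R)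
    (Φ : H → ℝ) (hΦ : Measurable Φ)
    (ξ : ℝ) (hξ : ξ = ∫ x₀, Real.exp (-Φ x₀) ∂prior) (hξpos : 0 < ξ)
    (hint : Integrable (fun x₀ => Real.exp (-Φ x₀)) prior)
    -- the OU transition kernel at time `t`
    (κ : Kernel H H) [IsMarkovKernel κ]
    (hκ : ∀ x₀, IsGaussianMeasure (κ x₀)
      (Real.exp (-t / 2) • x₀) ((1 - Real.exp (-t)) • C))
    -- `m` is a version of `E_prior[exp (-Φ(X₀)) | X_t = ·]`
    (m : H → ℝ) (hm : Measurable m)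
    (hmcond : (fun p : H × H => m p.2) =ᵐ[prior.compProd κ]
      (prior.compProd κ)[fun p : H × H => Real.exp (-Φ p.1) |
        MeasurableSpace.comap Prod.snd inferInstance]) :
    (prior.withDensity fun x₀ => ENNReal.ofReal (ξ⁻¹ * Real.exp (-Φ x₀))).bind κ ≪
        prior.bind κ ∧
      (prior.withDensity fun x₀ => ENNReal.ofReal (ξ⁻¹ * Real.exp (-Φ x₀))).bind κ =
        (prior.bind κ).withDensity fun x => ENNReal.ofReal (ξ⁻¹ * m x) :=
  marginal_posterior_density_general prior Φ hΦ ξ hξpos hint κ m hm hmcond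
end
end

section
/- (Denoising score matching identity for guidance) Let X_t = e^{-t/2} X_0 + sqrt(1-e^{-t}) ε with ε ~ N(0,C) independent of (X_0, Y), and let s(t,x) and s^y(t,x) be the unconditional and conditional scores defined via the posterior means. Then for any measurable u : [0,T] × H × Y → H with finite second moments, E[ || s^Y(t,X_t) - (s(t,X_t) + u(t,X_t,Y)) ||^2 ] = E[ || (1-e^{-t})^{-1}(X_t - e^{-t/2}X_0) + s(t,X_t) + u(t,X_t,Y) ||^2 ] + B, where B = - (e^{-t}/(1-e^{-t})^2) E[ || E[X_0 | X_t, Y] - X_0 ||^2 ] is independent of u. Hence, if B is finite, the minimizers of the two objectives coincide and the almost-surely unique minimizer is u*(t,x,y) = s^y(t,x) - s(t,x). -/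
/-!
Write `Z = (1 - e^{-t})⁻¹ (X_t - e^{-t/2} X_0)` for the noise target and `c = e^{-t/2} / (1 - e^{-t})`.
By the definition of `s^y`, `Z + s^Y(X_t) = c (E[X_0 | X_t, Y] - X_0)`, so the target residual
`Z + s(X_t) + u` is the scaled posterior error plus `D = s(X_t) + u - s^Y(X_t)`. Since `D` is
`σ(X_t, Y)`-measurable and the posterior error is `L²`-orthogonal to all such variables,
Pythagoras gives `E‖Z + s + u‖² = c² E‖E[X_0 | X_t, Y] - X_0‖² + E‖D‖² = -B + E‖D‖²`;
everything else follows from `E‖D‖² ≥ 0`, with equality iff `D = 0` a.s.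
-/

open MeasureTheory ProbabilityTheory Real
open scoped ENNReal RealInnerProductSpace

noncomputable section

variable {H : Type*} [NormedAddCommGroup H] [InnerProductSpace ℝ H] [CompleteSpace H]
  [SecondCountableTopology H] [MeasurableSpace H] [BorelSpace H]

section L2

variable {Ω F : Type*} {m m₀ : MeasurableSpace Ω} {μ : Measure Ω}
  [NormedAddCommGroup F]

theorem ae_eq_zero_of_integral_norm_sq_eq_zero {f : Ω → F}
    (hf : Integrable (fun ω => ‖f ω‖ ^ 2) μ) (h : ∫ ω, ‖f ω‖ ^ 2 ∂μ = 0) : f =ᵐ[μ] 0 := by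
  filter_upwards [(integral_eq_zero_iff_of_nonneg (fun ω => sq_nonneg _) hf).mp h] with ω hω
  simpa using hω

theorem aestronglyMeasurable_neg_smul_sub_smul_of_ae_eq_condExp [NormedSpace ℝ F] {X M f : Ω → F}
    (hX : AEStronglyMeasurable[m] X μ) (hM : M =ᵐ[μ] μ[f|m]) (a b : ℝ) :
    AEStronglyMeasurable[m] (fun ω => -(a • (X ω - b • M ω))) μ :=
  ((hX.sub ((stronglyMeasurable_condExp.aestronglyMeasurable.congr hM.symm).const_smul b)).const_smul
    a).neg

variable [InnerProductSpace ℝ F]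

theorem MeasureTheory.MemLp.integrable_inner {f g : Ω → F} (hf : MemLp f 2 μ) (hg : MemLp g 2 μ) :
    Integrable (fun ω => ⟪f ω, g ω⟫) μ :=
  (L2.integrable_inner (hf.toLp f) (hg.toLp g)).congr <| by
    filter_upwards [hf.coeFn_toLp, hg.coeFn_toLp] with ω hfω hgω
    rw [hfω, hgω]

theorem integral_norm_add_sq_of_integral_inner_eq_zero {f g : Ω → F} (hf : MemLp f 2 μ)
    (hg : MemLp g 2 μ) (hfg : ∫ ω, ⟪f ω, g ω⟫ ∂μ = 0) :
    ∫ ω, ‖f ω + g ω‖ ^ 2 ∂μ = ∫ ω, ‖f ω‖ ^ 2 ∂μ + ∫ ω, ‖g ω‖ ^ 2 ∂μ := by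
  have hf2 := hf.integrable_norm_pow two_ne_zero
  have hg2 := hg.integrable_norm_pow two_ne_zero
  have hfg2 := (hf.integrable_inner hg).const_mul 2
  simp_rw [norm_add_sq_real]
  rw [integral_add (by exact hf2.add hfg2) hg2, integral_add hf2 hfg2, integral_const_mul, hfg,
    mul_zero, add_zero]

variable [CompleteSpace F]

theorem integral_inner_condExp_left (hm : m ≤ m₀) [IsFiniteMeasure μ] {f g : Ω → F}
    (hf : MemLp f 2 μ) (hg : MemLp g 2 μ) (hgm : AEStronglyMeasurable[m] g μ) :
    ∫ ω, ⟪(μ[f|m]) ω, g ω⟫ ∂μ = ∫ ω, ⟪f ω, g ω⟫ ∂μ := by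
  have key := inner_condExpL2_eq_inner_fun (𝕜 := ℝ) hm (hf.toLp f) (hg.toLp g)
    (hgm.congr hg.coeFn_toLp.symm)
  rw [L2.inner_def, L2.inner_def] at key
  convert key using 1 <;> refine integral_congr_ae ?_
  · filter_upwards [hf.condExpL2_ae_eq_condExp (𝕜 := ℝ) hm, hg.coeFn_toLp] with ω hfω hgω
    rw [hfω, hgω]
  · filter_upwards [hf.coeFn_toLp, hg.coeFn_toLp] with ω hfω hgω
    rw [hfω, hgω]

theorem integral_norm_smul_sub_add_sq_of_ae_eq_condExp (hm : m ≤ m₀) [IsFiniteMeasure μ]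
    {f g M : Ω → F} (c : ℝ) (hf : MemLp f 2 μ) (hg : MemLp g 2 μ)
    (hgm : AEStronglyMeasurable[m] g μ) (hM : M =ᵐ[μ] μ[f|m]) :
    ∫ ω, ‖c • (M ω - f ω) + g ω‖ ^ 2 ∂μ =
      ∫ ω, ‖c • (M ω - f ω)‖ ^ 2 ∂μ + ∫ ω, ‖g ω‖ ^ 2 ∂μ := by
  have hcf : MemLp (μ[f|m]) 2 μ := hf.condExp one_le_two
  refine integral_norm_add_sq_of_integral_inner_eq_zero
    (((hcf.ae_eq hM.symm).sub hf).const_smul c) hg ?_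
  calc ∫ ω, ⟪c • (M ω - f ω), g ω⟫ ∂μ
      = c * (∫ ω, ⟪(μ[f|m]) ω, g ω⟫ ∂μ - ∫ ω, ⟪f ω, g ω⟫ ∂μ) := by
        rw [← integral_sub (hcf.integrable_inner hg) (hf.integrable_inner hg),
          ← integral_const_mul]
        refine integral_congr_ae ?_
        filter_upwards [hM] with ω hω
        rw [hω, real_inner_smul_left, inner_sub_left]
    _ = 0 := by rw [integral_inner_condExp_left hm hf hg hgm, sub_self, mul_zero]

/-- `Z`, `S`, `Sy`, `U` stand for the noise target, the two scores and the guidance term, and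
`c • (M - X)` for the scaled posterior error. -/
theorem guidance_objective_decomposition (hm : m ≤ m₀) [IsFiniteMeasure μ]
    {X M Z S Sy U : Ω → F} (c : ℝ) (hX : MemLp X 2 μ) (hM : M =ᵐ[μ] μ[X|m])
    (hZ : ∀ ω, Z ω + Sy ω = c • (M ω - X ω))
    (hS : MemLp S 2 μ) (hSm : AEStronglyMeasurable[m] S μ)
    (hSy : MemLp Sy 2 μ) (hSym : AEStronglyMeasurable[m] Sy μ)
    (hU : MemLp U 2 μ) (hUm : AEStronglyMeasurable[m] U μ) :
    (∫ ω, ‖Sy ω - (S ω + U ω)‖ ^ 2 ∂μ =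
        ∫ ω, ‖Z ω + S ω + U ω‖ ^ 2 ∂μ - ∫ ω, ‖c • (M ω - X ω)‖ ^ 2 ∂μ) ∧
      (∫ ω, ‖Z ω + S ω + (Sy ω - S ω)‖ ^ 2 ∂μ ≤ ∫ ω, ‖Z ω + S ω + U ω‖ ^ 2 ∂μ) ∧
      (∫ ω, ‖Z ω + S ω + U ω‖ ^ 2 ∂μ = ∫ ω, ‖Z ω + S ω + (Sy ω - S ω)‖ ^ 2 ∂μ →
        U =ᵐ[μ] fun ω => Sy ω - S ω) := by
  have hD : MemLp (fun ω => S ω + U ω - Sy ω) 2 μ := (hS.add hU).sub hSy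
  have hpyth := integral_norm_smul_sub_add_sq_of_ae_eq_condExp hm c hX hD
    ((hSm.add hUm).sub hSym) hM
  have hobj : ∀ ω, Z ω + S ω + U ω = c • (M ω - X ω) + (S ω + U ω - Sy ω) := fun ω => by
    rw [← hZ]; abel
  have hopt : ∀ ω, Z ω + S ω + (Sy ω - S ω) = c • (M ω - X ω) := fun ω => by
    rw [← hZ]; abel
  simp only [hobj, hopt, norm_sub_rev (Sy _), hpyth]
  have hD0 : 0 ≤ ∫ ω, ‖S ω + U ω - Sy ω‖ ^ 2 ∂μ := integral_nonneg fun ω => sq_nonneg _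
  refine ⟨by ring, by linarith, fun h => ?_⟩
  filter_upwards [ae_eq_zero_of_integral_norm_sq_eq_zero (hD.integrable_norm_pow two_ne_zero)
    (by linarith)] with ω hω
  exact eq_sub_of_add_eq' (sub_eq_zero.mp hω)

end L2

theorem inv_one_sub_exp_mul_exp_half_sq (t : ℝ) :
    ((1 - Real.exp (-t))⁻¹ * Real.exp (-t / 2)) ^ 2 = Real.exp (-t) / (1 - Real.exp (-t)) ^ 2 := by
  rw [mul_pow, ← Real.exp_nat_mul, inv_pow]
  ring_nf

theorem supervised_guidance_training_identity_general
    {Ω : Type*} [MeasurableSpace Ω] (P : Measure Ω) [IsProbabilityMeasure P]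
    {E : Type*} [MeasurableSpace E]
    (t : ℝ)
    (X0 Xt ε : Ω → H) (Y : Ω → E)
    (hX0 : Measurable X0) (hε : Measurable ε) (hY : Measurable Y)
    (hXt : Xt = fun ω => Real.exp (-t / 2) • X0 ω + Real.sqrt (1 - Real.exp (-t)) • ε ω)
    (m : H → H) (mY : H → E → H)
    (hm : (fun ω => m (Xt ω)) =ᵐ[P] P[X0 | MeasurableSpace.comap Xt inferInstance])
    (hmY : (fun ω => mY (Xt ω) (Y ω)) =ᵐ[P]
      P[X0 | MeasurableSpace.comap Xt inferInstance ⊔ MeasurableSpace.comap Y inferInstance])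
    (s : H → H) (sy : H → E → H)
    (hs : ∀ x, s x = -((1 - Real.exp (-t))⁻¹ • (x - Real.exp (-t / 2) • m x)))
    (hsy : ∀ x y, sy x y = -((1 - Real.exp (-t))⁻¹ • (x - Real.exp (-t / 2) • mY x y)))
    -- second-moment assumptions
    (hX0sq : Integrable (fun ω => ‖X0 ω‖ ^ 2) P)
    (hssq : Integrable (fun ω => ‖s (Xt ω)‖ ^ 2) P)
    (hsysq : Integrable (fun ω => ‖sy (Xt ω) (Y ω)‖ ^ 2) P)
    (u : H → E → H) (hu : Measurable fun p : H × E => u p.1 p.2)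
    (husq : Integrable (fun ω => ‖u (Xt ω) (Y ω)‖ ^ 2) P)
    (B : ℝ)
    (hB : B = -(Real.exp (-t) / (1 - Real.exp (-t)) ^ 2) *
      ∫ ω, ‖mY (Xt ω) (Y ω) - X0 ω‖ ^ 2 ∂P) :
    (∫ ω, ‖sy (Xt ω) (Y ω) - (s (Xt ω) + u (Xt ω) (Y ω))‖ ^ 2 ∂P =
        (∫ ω, ‖(1 - Real.exp (-t))⁻¹ • (Xt ω - Real.exp (-t / 2) • X0 ω) +
          s (Xt ω) + u (Xt ω) (Y ω)‖ ^ 2 ∂P) + B) ∧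
      (∫ ω, ‖(1 - Real.exp (-t))⁻¹ • (Xt ω - Real.exp (-t / 2) • X0 ω) +
          s (Xt ω) + (sy (Xt ω) (Y ω) - s (Xt ω))‖ ^ 2 ∂P ≤
        ∫ ω, ‖(1 - Real.exp (-t))⁻¹ • (Xt ω - Real.exp (-t / 2) • X0 ω) +
          s (Xt ω) + u (Xt ω) (Y ω)‖ ^ 2 ∂P) ∧
      (∫ ω, ‖(1 - Real.exp (-t))⁻¹ • (Xt ω - Real.exp (-t / 2) • X0 ω) +
          s (Xt ω) + u (Xt ω) (Y ω)‖ ^ 2 ∂P =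
        ∫ ω, ‖(1 - Real.exp (-t))⁻¹ • (Xt ω - Real.exp (-t / 2) • X0 ω) +
          s (Xt ω) + (sy (Xt ω) (Y ω) - s (Xt ω))‖ ^ 2 ∂P →
        (fun ω => u (Xt ω) (Y ω)) =ᵐ[P] fun ω => sy (Xt ω) (Y ω) - s (Xt ω)) := by
  have hXt_meas : Measurable Xt := by rw [hXt]; fun_prop
  -- stated before `𝔪X`, `𝔪` enter the context, where they would shadow the ambient instance
  have hL2 := fun {g : Ω → H} (hg : AEStronglyMeasurable g P) =>
    (memLp_two_iff_integrable_sq_norm hg).mpr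
  set 𝔪X : MeasurableSpace Ω := MeasurableSpace.comap Xt inferInstance
  set 𝔪 : MeasurableSpace Ω := 𝔪X ⊔ MeasurableSpace.comap Y inferInstance
  have h𝔪 : 𝔪 ≤ _ := sup_le hXt_meas.comap_le hY.comap_le
  have hXt𝔪X : AEStronglyMeasurable[𝔪X] Xt P :=
    (Measurable.of_comap_le le_rfl).stronglyMeasurable.aestronglyMeasurable
  have hs𝔪X : AEStronglyMeasurable[𝔪X] (fun ω => s (Xt ω)) P := by
    simpa only [hs] using aestronglyMeasurable_neg_smul_sub_smul_of_ae_eq_condExp hXt𝔪X hm _ _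
  have hs𝔪 : AEStronglyMeasurable[𝔪] (fun ω => s (Xt ω)) P := hs𝔪X.mono le_sup_left
  have hsy𝔪 : AEStronglyMeasurable[𝔪] (fun ω => sy (Xt ω) (Y ω)) P := by
    simpa only [hsy] using aestronglyMeasurable_neg_smul_sub_smul_of_ae_eq_condExp (m := 𝔪)
      (hXt𝔪X.mono le_sup_left) hmY _ _
  have hu𝔪 : AEStronglyMeasurable[𝔪] (fun ω => u (Xt ω) (Y ω)) P :=
    (hu.comp ((Measurable.of_comap_le le_sup_left).prodMk
      (Measurable.of_comap_le le_sup_right))).aestronglyMeasurable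
  have hposterior : ∫ ω, ‖((1 - Real.exp (-t))⁻¹ * Real.exp (-t / 2)) •
      (mY (Xt ω) (Y ω) - X0 ω)‖ ^ 2 ∂P = -B := by
    simp_rw [norm_smul, mul_pow (‖_‖), Real.norm_eq_abs, sq_abs]
    rw [integral_const_mul, inv_one_sub_exp_mul_exp_half_sq, hB, neg_mul, neg_neg]
  rw [← sub_neg_eq_add _ B, ← hposterior]
  exact guidance_objective_decomposition h𝔪 _ (hL2 hX0.aestronglyMeasurable hX0sq) hmY
    (fun ω => by rw [hsy]; module) (hL2 (hs𝔪.mono h𝔪) hssq) hs𝔪 (hL2 (hsy𝔪.mono h𝔪) hsysq) hsy𝔪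
    (hL2 (hu𝔪.mono h𝔪) husq) hu𝔪

/-- **Denoising score matching identity for guidance (Supervised Guidance Training).**
Let `Xt = e^{-t/2} X0 + √(1-e^{-t}) ε` with `ε ~ N(0,C)` independent of `(X0, Y)`, and let
`s`, `sy` be the unconditional and conditional scores, defined through versions `m`, `mY` of
the posterior means `E[X0|Xt=·]` and `E[X0|Xt=·, Y=·]`. Then for any `u : H × E → H` with
finite second moment,
`E‖s^Y(t,Xt) - (s(t,Xt)+u(Xt,Y))‖² = E‖(1-e^{-t})⁻¹(Xt-e^{-t/2}X0)+s(t,Xt)+u(Xt,Y)‖² + B`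
with `B = -(e^{-t}/(1-e^{-t})²) E‖E[X0|Xt,Y] - X0‖²` independent of `u`; hence if `B` is
finite, the two objectives have the same minimisers, and the a.s.-unique minimiser is
`u* = s^y - s`. -/
theorem supervised_guidance_training_identity
    {Ω : Type*} [MeasurableSpace Ω] (P : Measure Ω) [IsProbabilityMeasure P]
    {E : Type*} [MeasurableSpace E]
    (C : H →L[ℝ] H)
    (t : ℝ) (ht : 0 < t)
    (X0 Xt ε : Ω → H) (Y : Ω → E)
    (hX0 : Measurable X0) (hε : Measurable ε) (hY : Measurable Y)
    (hεlaw : IsGaussianMeasure (P.map ε) 0 C)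
    (hindep : IndepFun (fun ω => (X0 ω, Y ω)) ε P)
    (hXt : Xt = fun ω => Real.exp (-t / 2) • X0 ω + Real.sqrt (1 - Real.exp (-t)) • ε ω)
    (m : H → H) (mY : H → E → H)
    (hm : (fun ω => m (Xt ω)) =ᵐ[P] P[X0 | MeasurableSpace.comap Xt inferInstance])
    (hmY : (fun ω => mY (Xt ω) (Y ω)) =ᵐ[P]
      P[X0 | MeasurableSpace.comap Xt inferInstance ⊔ MeasurableSpace.comap Y inferInstance])
    (s : H → H) (sy : H → E → H)
    (hs : ∀ x, s x = -((1 - Real.exp (-t))⁻¹ • (x - Real.exp (-t / 2) • m x)))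
    (hsy : ∀ x y, sy x y = -((1 - Real.exp (-t))⁻¹ • (x - Real.exp (-t / 2) • mY x y)))
    -- second-moment assumptions
    (hX0sq : Integrable (fun ω => ‖X0 ω‖ ^ 2) P)
    (hssq : Integrable (fun ω => ‖s (Xt ω)‖ ^ 2) P)
    (hsysq : Integrable (fun ω => ‖sy (Xt ω) (Y ω)‖ ^ 2) P)
    (hεsq : Integrable (fun ω => ‖ε ω‖ ^ 2) P)
    (u : H → E → H) (hu : Measurable fun p : H × E => u p.1 p.2)
    (husq : Integrable (fun ω => ‖u (Xt ω) (Y ω)‖ ^ 2) P)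
    (B : ℝ)
    (hB : B = -(Real.exp (-t) / (1 - Real.exp (-t)) ^ 2) *
      ∫ ω, ‖mY (Xt ω) (Y ω) - X0 ω‖ ^ 2 ∂P) :
    (∫ ω, ‖sy (Xt ω) (Y ω) - (s (Xt ω) + u (Xt ω) (Y ω))‖ ^ 2 ∂P =
        (∫ ω, ‖(1 - Real.exp (-t))⁻¹ • (Xt ω - Real.exp (-t / 2) • X0 ω) +
          s (Xt ω) + u (Xt ω) (Y ω)‖ ^ 2 ∂P) + B) ∧
      (∫ ω, ‖(1 - Real.exp (-t))⁻¹ • (Xt ω - Real.exp (-t / 2) • X0 ω) +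
          s (Xt ω) + (sy (Xt ω) (Y ω) - s (Xt ω))‖ ^ 2 ∂P ≤
        ∫ ω, ‖(1 - Real.exp (-t))⁻¹ • (Xt ω - Real.exp (-t / 2) • X0 ω) +
          s (Xt ω) + u (Xt ω) (Y ω)‖ ^ 2 ∂P) ∧
      (∫ ω, ‖(1 - Real.exp (-t))⁻¹ • (Xt ω - Real.exp (-t / 2) • X0 ω) +
          s (Xt ω) + u (Xt ω) (Y ω)‖ ^ 2 ∂P =
        ∫ ω, ‖(1 - Real.exp (-t))⁻¹ • (Xt ω - Real.exp (-t / 2) • X0 ω) +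
          s (Xt ω) + (sy (Xt ω) (Y ω) - s (Xt ω))‖ ^ 2 ∂P →
        (fun ω => u (Xt ω) (Y ω)) =ᵐ[P] fun ω => sy (Xt ω) (Y ω) - s (Xt ω)) :=
  supervised_guidance_training_identity_general P t X0 Xt ε Y hX0 hε hY hXt m mY hm hmY s sy hs hsy
    hX0sq hssq hsysq u hu husq B hB
end
end

section
/- (Bayes' theorem in function space) Let π be a probability (prior) measure on a Hilbert space H, π_0 a reference measure on an observation space Y, and suppose the conditional law π^f of y given f satisfies dπ^f/dπ_0 (y) = exp(-Φ(f,y)) for π-a.e. f, with Φ measurable and ξ(y) := E_{f ~ π}[exp(-Φ(f,y))] ∈ (0,∞) for π_0-a.e. y. Then for π_0-a.e. y, the posterior π^y (the regular conditional law of f given y) is absolutely continuous with respect to π with dπ^y/dπ (f) = ξ(y)^{-1} exp(-Φ(f, y)). -/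
/-!
The likelihood `g` turns the joint law of parameter and data into a density against a product:
`μ ⊗ₘ κ = (μ.prod ν).withDensity g`. Hence the data marginal `κ ∘ₘ μ` has density
`m x = ∫⁻ ω, g ω x ∂μ` against `ν`, which is finite `ν`-a.e., and the kernel
`x ↦ μ.withDensity (g · x / m x)` recomposes with `κ ∘ₘ μ` to the swapped joint law, since
`m x * (g ω x / m x) = g ω x` for `ν.prod μ`-a.e. `(x, ω)`. The posterior is the a.e. unique such
disintegration. For the likelihood `exp (-Φ)`, `m = ofReal ξ` wherever `exp (-Φ (·, y))` is
integrable.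
-/

open MeasureTheory ProbabilityTheory Real
open scoped ENNReal RealInnerProductSpace

noncomputable section

variable {H : Type*} [NormedAddCommGroup H] [InnerProductSpace ℝ H] [CompleteSpace H]
  [SecondCountableTopology H] [MeasurableSpace H] [BorelSpace H] [Nonempty H]

section

variable {Ω 𝓧 : Type*} [MeasurableSpace Ω] [MeasurableSpace 𝓧]
  {μ : Measure Ω} {ν : Measure 𝓧} {g : Ω → 𝓧 → ℝ≥0∞}

lemma ae_lintegral_mul_div_lintegral {f : Ω → ℝ≥0∞} (hf : Measurable f)
    (hfin : ∫⁻ ω, f ω ∂μ ≠ ∞) :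
    ∀ᵐ ω ∂μ, (∫⁻ ω', f ω' ∂μ) * (f ω / ∫⁻ ω', f ω' ∂μ) = f ω := by
  by_cases h0 : ∫⁻ ω, f ω ∂μ = 0
  · filter_upwards [(lintegral_eq_zero_iff hf).1 h0] with ω hω
    exact ENNReal.mul_div_cancel' (fun _ ↦ hω) (fun h ↦ absurd h hfin)
  · exact ae_of_all _ fun _ ↦ ENNReal.mul_div_cancel h0 hfin

lemma MeasureTheory.Measure.map_swap_withDensity_prod [SFinite μ] [SFinite ν]
    {f : Ω × 𝓧 → ℝ≥0∞} (hf : Measurable f) :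
    ((μ.prod ν).withDensity f).map Prod.swap = (ν.prod μ).withDensity (f ∘ Prod.swap) := by
  refine ext_of_lintegral _ fun φ hφ ↦ ?_
  rw [lintegral_map hφ measurable_swap,
    lintegral_withDensity_eq_lintegral_mul (g := fun p ↦ φ p.swap) _ hf (by fun_prop),
    lintegral_withDensity_eq_lintegral_mul _ (hf.comp measurable_swap) hφ,
    ← lintegral_prod_swap]
  rfl

lemma MeasureTheory.Measure.compProd_eq_withDensity_prod [SFinite μ] [SFinite ν]
    {κ : Kernel Ω 𝓧} [IsSFiniteKernel κ] (hg : Measurable (Function.uncurry g))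
    (hκ : ∀ᵐ ω ∂μ, κ ω = ν.withDensity (g ω)) :
    μ ⊗ₘ κ = (μ.prod ν).withDensity (Function.uncurry g) := by
  ext s hs
  rw [Measure.compProd_apply hs, withDensity_apply _ hs, ← lintegral_indicator hs,
    lintegral_prod _ (hg.indicator hs).aemeasurable]
  refine lintegral_congr_ae ?_
  filter_upwards [hκ] with ω hω
  rw [hω, withDensity_apply _ (measurable_prodMk_left hs),
    ← lintegral_indicator (measurable_prodMk_left hs)]
  rfl

lemma MeasureTheory.Measure.comp_eq_withDensity_lintegral [SFinite μ] [SFinite ν]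
    {κ : Kernel Ω 𝓧} [IsSFiniteKernel κ] (hg : Measurable (Function.uncurry g))
    (hκ : ∀ᵐ ω ∂μ, κ ω = ν.withDensity (g ω)) :
    κ ∘ₘ μ = ν.withDensity fun x ↦ ∫⁻ ω, g ω x ∂μ := by
  ext t ht
  rw [← Measure.snd_compProd, Measure.compProd_eq_withDensity_prod hg hκ, Measure.snd_apply ht,
    withDensity_apply _ (measurable_snd ht), withDensity_apply _ ht, ← Set.univ_prod,
    setLIntegral_prod_symm _ hg.aemeasurable, Measure.restrict_univ]
  rfl

-- Where `∫⁻ ω', g ω' x ∂μ` is `0` or `∞` the total mass is `0`, not `1`: this kernel is finite but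
-- not Markov, which is harmless since such `x` are null for the data marginal.
variable (μ g) in
def bayesKernel [SFinite μ] : Kernel 𝓧 Ω :=
  (Kernel.const 𝓧 μ).withDensity fun x ω ↦ g ω x / ∫⁻ ω', g ω' x ∂μ

lemma measurable_uncurry_div_lintegral [SFinite μ] (hg : Measurable (Function.uncurry g)) :
    Measurable (Function.uncurry fun x ω ↦ g ω x / ∫⁻ ω', g ω' x ∂μ) :=
  (hg.comp measurable_swap).div (hg.lintegral_prod_left.comp measurable_fst)

lemma bayesKernel_apply [SFinite μ] (hg : Measurable (Function.uncurry g)) (x : 𝓧) :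
    bayesKernel μ g x = μ.withDensity fun ω ↦ g ω x / ∫⁻ ω', g ω' x ∂μ := by
  rw [bayesKernel, Kernel.withDensity_apply _ (measurable_uncurry_div_lintegral hg),
    Kernel.const_apply]

lemma isFiniteKernel_bayesKernel [SFinite μ] (hg : Measurable (Function.uncurry g)) :
    IsFiniteKernel (bayesKernel μ g) := by
  refine ⟨⟨1, ENNReal.one_lt_top, fun x ↦ ?_⟩⟩
  rw [bayesKernel_apply hg, withDensity_apply _ MeasurableSet.univ, Measure.restrict_univ]
  simp_rw [div_eq_mul_inv]
  rw [lintegral_mul_const (f := fun ω ↦ g ω x) _ (hg.comp measurable_prodMk_right)]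
  exact ENNReal.mul_inv_le_one _

lemma compProd_bayesKernel_eq_map_swap [IsFiniteMeasure μ] [SFinite ν]
    {κ : Kernel Ω 𝓧} [IsFiniteKernel κ]
    (hg : Measurable (Function.uncurry g)) (hκ : ∀ᵐ ω ∂μ, κ ω = ν.withDensity (g ω)) :
    (κ ∘ₘ μ) ⊗ₘ bayesKernel μ g = (μ ⊗ₘ κ).map Prod.swap := by
  have := isFiniteKernel_bayesKernel (μ := μ) hg
  set m : 𝓧 → ℝ≥0∞ := fun x ↦ ∫⁻ ω, g ω x ∂μ
  have hm : Measurable m := hg.lintegral_prod_left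
  have hmarg : κ ∘ₘ μ = ν.withDensity m := Measure.comp_eq_withDensity_lintegral hg hκ
  have hm_fin : ∀ᵐ x ∂ν, m x ≠ ∞ := by
    refine (ae_lt_top hm ?_).mono fun _ ↦ ne_of_lt
    rw [← setLIntegral_univ, ← withDensity_apply _ MeasurableSet.univ, ← hmarg]
    exact measure_ne_top _ _
  have hcancel : ∀ᵐ p ∂ν.prod μ, m p.1 * (g p.2 p.1 / m p.1) = g p.2 p.1 := by
    refine (Measure.ae_prod_iff_ae_ae (measurableSet_eq_fun
      ((hm.comp measurable_fst).mul (measurable_uncurry_div_lintegral hg))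
      (hg.comp measurable_swap))).2 ?_
    filter_upwards [hm_fin] with x hx
    exact ae_lintegral_mul_div_lintegral (hg.comp measurable_prodMk_right) hx
  calc (κ ∘ₘ μ) ⊗ₘ bayesKernel μ g
      = ((ν.withDensity m).prod μ).withDensity fun p ↦ g p.2 p.1 / m p.1 := by
        rw [hmarg, Measure.compProd_eq_withDensity_prod (measurable_uncurry_div_lintegral hg)
          (ae_of_all _ (bayesKernel_apply hg))]
        rfl
    _ = (ν.prod μ).withDensity fun p ↦ m p.1 * (g p.2 p.1 / m p.1) := by
        rw [prod_withDensity_left hm]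
        exact (withDensity_mul _ (hm.comp measurable_fst)
          (measurable_uncurry_div_lintegral hg)).symm
    _ = (ν.prod μ).withDensity (Function.uncurry g ∘ Prod.swap) := withDensity_congr_ae hcancel
    _ = (μ ⊗ₘ κ).map Prod.swap := by
        rw [Measure.compProd_eq_withDensity_prod hg hκ, Measure.map_swap_withDensity_prod hg]

theorem posterior_ae_eq_withDensity_div_lintegral [StandardBorelSpace Ω] [Nonempty Ω]
    [IsFiniteMeasure μ] [SFinite ν] {κ : Kernel Ω 𝓧} [IsFiniteKernel κ]
    (hg : Measurable (Function.uncurry g)) (hκ : ∀ᵐ ω ∂μ, κ ω = ν.withDensity (g ω)) :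
    ∀ᵐ x ∂(κ ∘ₘ μ), (κ†μ) x = μ.withDensity fun ω ↦ g ω x / ∫⁻ ω', g ω' x ∂μ := by
  have := isFiniteKernel_bayesKernel (μ := μ) hg
  filter_upwards [ae_eq_posterior_of_compProd_eq (compProd_bayesKernel_eq_map_swap hg hκ)] with x hx
  rw [← hx, bayesKernel_apply hg]

end

theorem bayes_theorem_function_space_general
    {E : Type*} [MeasurableSpace E]
    (prior : Measure H) [IsProbabilityMeasure prior]
    (π₀ : Measure E) [SigmaFinite π₀]
    (Φ : H → E → ℝ) (hΦ : Measurable fun p : H × E => Φ p.1 p.2)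
    -- the conditional law of the observation given `f`
    (κ : Kernel H E) [IsMarkovKernel κ]
    (hκ : ∀ᵐ f ∂prior, κ f = π₀.withDensity fun y => ENNReal.ofReal (Real.exp (-Φ f y)))
    (ξ : E → ℝ) (hξ : ∀ y, ξ y = ∫ f, Real.exp (-Φ f y) ∂prior)
    (hξpos : ∀ᵐ y ∂π₀, 0 < ξ y)
    (hξfin : ∀ᵐ y ∂π₀, Integrable (fun f => Real.exp (-Φ f y)) prior) :
    ∀ᵐ y ∂((prior.compProd κ).map Prod.snd),
      condDistrib Prod.fst Prod.snd (prior.compProd κ) y ≪ prior ∧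
        condDistrib Prod.fst Prod.snd (prior.compProd κ) y =
          prior.withDensity fun f => ENNReal.ofReal ((ξ y)⁻¹ * Real.exp (-Φ f y)) := by
  set g : H → E → ℝ≥0∞ := fun f y ↦ ENNReal.ofReal (Real.exp (-Φ f y))
  have hg : Measurable (Function.uncurry g) := hΦ.neg.exp.ennreal_ofReal
  -- both are the conditional kernel of the swapped joint law
  have hcondDistrib : condDistrib Prod.fst Prod.snd (prior ⊗ₘ κ) = κ†prior := by
    rw [condDistrib]; rfl
  have hmarginal_ac : κ ∘ₘ prior ≪ π₀ := by
    rw [Measure.comp_eq_withDensity_lintegral hg hκ]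
    exact withDensity_absolutelyContinuous _ _
  have hdensity : ∀ᵐ y ∂π₀, ∀ f, g f y / ∫⁻ f', g f' y ∂prior
      = ENNReal.ofReal ((ξ y)⁻¹ * Real.exp (-Φ f y)) := by
    filter_upwards [hξpos, hξfin] with y hpos hint f
    rw [← ofReal_integral_eq_lintegral_ofReal hint (ae_of_all _ fun _ ↦ (exp_pos _).le), ← hξ,
      ← ENNReal.ofReal_div_of_pos hpos, inv_mul_eq_div]
  rw [← Measure.snd, Measure.snd_compProd, hcondDistrib]
  filter_upwards [posterior_ae_eq_withDensity_div_lintegral hg hκ, hmarginal_ac.ae_le hdensity]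
    with y hposterior hy
  rw [hposterior]
  exact ⟨withDensity_absolutelyContinuous _ _, congrArg _ (funext hy)⟩

/-- **Bayes' theorem in function space (Dashti–Stuart).**
Let `prior` be a probability measure on a Hilbert space `H`, `π₀` a reference measure on an
observation space `E`, and suppose the conditional law `κ f` of `y` given `f` satisfies
`dκ f/dπ₀ (y) = exp(-Φ(f,y))` for `prior`-a.e. `f`, with `Φ` jointly measurable and
`ξ(y) = E_{f ~ prior}[exp(-Φ(f,y))] ∈ (0, ∞)` for `π₀`-a.e. `y`. Then for a.e. `y` (w.r.t.
the marginal law of the observation), the posterior — the regular conditional law of `f`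
given `y`, i.e. `condDistrib Prod.fst Prod.snd (prior ⊗ₘ κ)` — is absolutely continuous
w.r.t. `prior` with density `ξ(y)⁻¹ exp(-Φ(·, y))`. -/
theorem bayes_theorem_function_space
    {E : Type*} [MeasurableSpace E] [StandardBorelSpace E] [Nonempty E]
    (prior : Measure H) [IsProbabilityMeasure prior]
    (π₀ : Measure E) [SigmaFinite π₀]
    (Φ : H → E → ℝ) (hΦ : Measurable fun p : H × E => Φ p.1 p.2)
    -- the conditional law of the observation given `f`
    (κ : Kernel H E) [IsMarkovKernel κ]
    (hκ : ∀ᵐ f ∂prior, κ f = π₀.withDensity fun y => ENNReal.ofReal (Real.exp (-Φ f y)))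
    (ξ : E → ℝ) (hξ : ∀ y, ξ y = ∫ f, Real.exp (-Φ f y) ∂prior)
    (hξpos : ∀ᵐ y ∂π₀, 0 < ξ y)
    (hξfin : ∀ᵐ y ∂π₀, Integrable (fun f => Real.exp (-Φ f y)) prior) :
    ∀ᵐ y ∂((prior.compProd κ).map Prod.snd),
      condDistrib Prod.fst Prod.snd (prior.compProd κ) y ≪ prior ∧
        condDistrib Prod.fst Prod.snd (prior.compProd κ) y =
          prior.withDensity fun f => ENNReal.ofReal ((ξ y)⁻¹ * Real.exp (-Φ f y)) :=
  bayes_theorem_function_space_general prior π₀ Φ hΦ κ hκ ξ hξ hξpos hξfin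
end
end

section
/- (Feldman–Hájek shift singularity) Let μ = N(0, C) be a Gaussian measure on a separable Hilbert space H with trace-class covariance C, and let h ∈ H not belong to the Cameron–Martin space C^{1/2}(H). Then the shifted measure μ_h := N(h, C) and μ are mutually singular. -/
/-!
If `h ∉ range √C`, the functional `√C x ↦ ⟪h, x⟫` is unbounded (otherwise Hahn–Banach and Riesz
would produce `z` with `√C z = h`), so there are directions `x` with `⟪C x, x⟫ = ‖√C x‖² = 1` and
`⟪h, x⟫` as large as we like. Along such an `x` the functional `⟪x, ·⟫` is `N(0, 1)` under `μ` and
`N(⟪h, x⟫, 1)` under `μ_h`, so a half-line `{⟪x, ·⟫ > r}` is almost `μ`-null while its complement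
is almost `μ_h`-null. Two measures admitting such almost-separating sets for every `ε` are
mutually singular.
-/

open MeasureTheory ProbabilityTheory Real
open scoped ENNReal RealInnerProductSpace

noncomputable section

variable {H : Type*} [NormedAddCommGroup H] [InnerProductSpace ℝ H] [CompleteSpace H]
  [SecondCountableTopology H] [MeasurableSpace H] [BorelSpace H]

open Filter Set ContinuousLinearMap
open scoped Topology

theorem MeasureTheory.Measure.mutuallySingular_of_forall_exists_measure_le {α : Type*}
    [MeasurableSpace α] {μ ν : Measure α} (h : ∀ ε > 0, ∃ t, μ t ≤ ε ∧ ν tᶜ ≤ ε) : μ ⟂ₘ ν := by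
  rw [Measure.mutuallySingular_iff_disjoint, disjoint_iff]
  suffices (μ ⊓ ν) univ ≤ 0 from Measure.measure_univ_eq_zero.1 (nonpos_iff_eq_zero.1 this)
  refine le_of_forall_gt_imp_ge_of_dense fun ε hε => ?_
  obtain ⟨t, hμt, hνt⟩ := h (ε / 2) (ENNReal.half_pos hε.ne')
  calc (μ ⊓ ν) univ ≤ (μ ⊓ ν) t + (μ ⊓ ν) tᶜ := measure_univ_le_add_compl t
    _ ≤ μ t + ν tᶜ :=
      add_le_add (Measure.le_iff'.1 inf_le_left t) (Measure.le_iff'.1 inf_le_right _)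
    _ ≤ ε / 2 + ε / 2 := add_le_add hμt hνt
    _ = ε := ENNReal.add_halves ε

lemma tendsto_measure_abs_gt_atTop (ν : Measure ℝ) [IsFiniteMeasure ν] :
    Tendsto (fun r => ν {y | r < |y|}) atTop (𝓝 0) := by
  have hempty : ⋂ r : ℝ, {y : ℝ | r < |y|} = ∅ :=
    eq_empty_of_forall_notMem fun y hy => lt_irrefl |y| (mem_iInter.1 hy |y|)
  have := tendsto_measure_iInter_atTop (μ := ν)
    (fun r => (measurableSet_lt measurable_const measurable_abs).nullMeasurableSet)
    (fun r s hrs y hy => lt_of_le_of_lt hrs hy) ⟨0, measure_ne_top ν _⟩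
  rwa [hempty, measure_empty] at this

lemma exists_measure_Ioi_le_and_map_add_Iic_le (ν : Measure ℝ) [IsFiniteMeasure ν]
    {ε : ℝ≥0∞} (hε : 0 < ε) :
    ∃ r : ℝ, ∀ a, 2 * r < a → ν (Ioi r) ≤ ε ∧ ν.map (· + a) (Iic r) ≤ ε := by
  obtain ⟨r, hr⟩ := ((tendsto_measure_abs_gt_atTop ν).eventually (ge_mem_nhds hε)).exists
  refine ⟨r, fun a ha => ⟨(measure_mono fun y hy => ?_).trans hr, ?_⟩⟩
  · exact lt_of_lt_of_le hy (le_abs_self y)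
  · rw [Measure.map_apply (measurable_add_const a) measurableSet_Iic]
    refine (measure_mono fun y (hy : y + a ≤ r) => ?_).trans hr
    show r < |y|
    linarith [neg_le_abs y]

section Range

variable {E F : Type*} [NormedAddCommGroup E] [InnerProductSpace ℝ E] [CompleteSpace E]
  [NormedAddCommGroup F] [InnerProductSpace ℝ F] [CompleteSpace F]

lemma mem_range_adjoint_of_inner_le (T : E →L[ℝ] F) {h : E} {M : ℝ}
    (hM : ∀ x, ⟪h, x⟫ ≤ M * ‖T x‖) : h ∈ range (adjoint T) := by
  have habs (x : E) : |⟪h, x⟫| ≤ M * ‖T x‖ :=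
    abs_le.2 ⟨by simpa [inner_neg_right] using neg_le_neg (hM (-x)), hM x⟩
  have hker : LinearMap.ker (T : E →ₗ[ℝ] F) ≤ LinearMap.ker (innerₗ E h) := fun x hx => by
    simpa [show T x = 0 from hx] using habs x
  let φ₀ : LinearMap.range (T : E →ₗ[ℝ] F) →ₗ[ℝ] ℝ :=
    (LinearMap.ker (T : E →ₗ[ℝ] F)).liftQ (innerₗ E h) hker ∘ₗ
      (T : E →ₗ[ℝ] F).quotKerEquivRange.symm
  have hφ₀ (x : E) : φ₀ ⟨T x, LinearMap.mem_range_self _ x⟩ = ⟪h, x⟫ := by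
    simp only [φ₀, LinearMap.comp_apply, LinearEquiv.coe_coe]
    exact congrArg _ (LinearMap.quotKerEquivRange_symm_apply_image (T : E →ₗ[ℝ] F) x _)
  let φ := φ₀.mkContinuous M fun ⟨_, x, hx⟩ => by
    subst hx; simpa [hφ₀] using habs x
  obtain ⟨g, hg, -⟩ := exists_extension_norm_eq _ φ
  refine ⟨(InnerProductSpace.toDual ℝ F).symm g, ext_inner_right ℝ fun x => ?_⟩
  rw [adjoint_inner_left, InnerProductSpace.toDual_symm_apply,
    hg ⟨T x, LinearMap.mem_range_self _ x⟩]
  exact hφ₀ x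

lemma exists_norm_eq_one_lt_inner_of_notMem_range_adjoint {T : E →L[ℝ] F}
    (hT : Function.Injective T) {h : E} (hh : h ∉ range (adjoint T)) (M : ℝ) :
    ∃ x, ‖T x‖ = 1 ∧ M < ⟪h, x⟫ := by
  obtain ⟨x, hx⟩ : ∃ x, M * ‖T x‖ < ⟪h, x⟫ := by
    by_contra! hle
    exact hh (mem_range_adjoint_of_inner_le T hle)
  have hTx : 0 < ‖T x‖ := by
    refine norm_pos_iff.2 fun h0 => ?_
    rw [hT (h0.trans (map_zero T).symm)] at hx
    simp at hx
  refine ⟨‖T x‖⁻¹ • x, ?_, ?_⟩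
  · rw [map_smul, norm_smul, norm_inv, norm_norm, inv_mul_cancel₀ hTx.ne']
  · rw [inner_smul_right, ← div_eq_inv_mul, lt_div_iff₀ hTx]
    exact hx

end Range

omit [SecondCountableTopology H] [BorelSpace H] in
lemma IsGaussianMeasure.map_toDual {μ : Measure H} {m : H} {C : H →L[ℝ] H}
    (hμ : IsGaussianMeasure μ m C) (x : H) :
    μ.map (InnerProductSpace.toDual ℝ H x) = gaussianReal ⟪x, m⟫ (⟪C x, x⟫.toNNReal) := by
  rw [hμ.2, LinearIsometryEquiv.symm_apply_apply, InnerProductSpace.toDual_apply_apply]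

theorem feldman_hajek_shift_singularity_general
    (C sqrtC : H →L[ℝ] H)
    (hCinj : Function.Injective C)
    (hsqrt : sqrtC.comp sqrtC = C) (hsqrtsa : IsSelfAdjoint sqrtC)
    (h : H) (hh : h ∉ Set.range sqrtC)
    (μ μh : Measure H)
    (hμ : IsGaussianMeasure μ 0 C) (hμh : IsGaussianMeasure μh h C) :
    μ.MutuallySingular μh := by
  have hinj : Function.Injective sqrtC :=
    Function.Injective.of_comp (f := sqrtC) (by rwa [← coe_comp, hsqrt])
  have hC (x : H) : ⟪C x, x⟫ = ‖sqrtC x‖ ^ 2 := by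
    rw [apply_norm_sq_eq_inner_adjoint_left, hsqrtsa.adjoint_eq, hsqrt, RCLike.re_to_real]
  refine Measure.mutuallySingular_of_forall_exists_measure_le fun ε hε => ?_
  obtain ⟨r, hr⟩ := exists_measure_Ioi_le_and_map_add_Iic_le (gaussianReal 0 1) hε
  obtain ⟨x, hx, hhx⟩ := exists_norm_eq_one_lt_inner_of_notMem_range_adjoint hinj
    (hsqrtsa.adjoint_eq ▸ hh) (2 * r)
  set l := InnerProductSpace.toDual ℝ H x
  have hμl : μ.map l = gaussianReal 0 1 := by
    rw [hμ.map_toDual, hC, hx]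
    simp
  have hμhl : μh.map l = (gaussianReal 0 1).map (· + ⟪h, x⟫) := by
    rw [hμh.map_toDual, gaussianReal_map_add_const, hC, hx, real_inner_comm]
    simp
  refine ⟨l ⁻¹' Ioi r, ?_, ?_⟩
  · rw [← Measure.map_apply l.continuous.measurable measurableSet_Ioi, hμl]
    exact (hr _ hhx).1
  · rw [← preimage_compl, compl_Ioi, ← Measure.map_apply l.continuous.measurable measurableSet_Iic,
      hμhl]
    exact (hr _ hhx).2

/-- **Feldman–Hájek shift singularity.**
Let `μ = N(0, C)` be a Gaussian measure on a separable Hilbert space with positive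
self-adjoint injective trace-class covariance `C` (with square root `√C`, whose range is the
Cameron–Martin space), and let `h ∈ H` not belong to the Cameron–Martin space `√C(H)`.
Then the shifted measure `μ_h = N(h, C)` and `μ` are mutually singular. -/
theorem feldman_hajek_shift_singularity
    (C sqrtC : H →L[ℝ] H)
    (hCsa : IsSelfAdjoint C) (hCpos : IsPositiveOp C) (hCtr : IsTraceClassOp C)
    (hCinj : Function.Injective C)
    (hsqrt : sqrtC.comp sqrtC = C) (hsqrtsa : IsSelfAdjoint sqrtC)
    (hsqrtpos : IsPositiveOp sqrtC)
    (h : H) (hh : h ∉ Set.range sqrtC)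
    (μ μh : Measure H)
    (hμ : IsGaussianMeasure μ 0 C) (hμh : IsGaussianMeasure μh h C) :
    μ.MutuallySingular μh :=
  feldman_hajek_shift_singularity_general C sqrtC hCinj hsqrt hsqrtsa h hh μ μh hμ hμh
end
end
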